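/- Let k be a field of characteristic 2 and let a ∈ k with a ≠ 0. Let F = x⁶ + (y² + xz)²·(a·x + z)·z ∈ k[x,y,z]. A nonzero triple (x,y,z) ∈ k³ satisfies F(x,y,z) = 0 and (∂F/∂x)(x,y,z) = (∂F/∂y)(x,y,z) = (∂F/∂z)(x,y,z) = 0 if and only if either (x = y = 0) or (x = z = 0). That is, the sextic curve F = 0 in ℙ²(k) has exactly two singular points, namely (0:0:1) and (0:1:0). -/

import Mathlib

/-!
In characteristic 2 the partial derivatives of `F = x⁶ + w²(ax + z)z`, where `w = y² + xz`,
are `a z w²`, `0` and `a x w²`. So a singular point has either `w = 0`, and then `F = x⁶`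
forces `x = 0` and `y² = w = 0`, or `w ≠ 0`, and then `a ≠ 0` forces `x = z = 0`.
-/

open MvPolynomial

namespace CobleSextic

variable {R : Type*} [CommRing R]

noncomputable def sextic (a : R) : MvPolynomial (Fin 3) R :=
  X 0 ^ 6 + (X 1 ^ 2 + X 0 * X 2) ^ 2 * (C a * X 0 + X 2) * X 2

lemma eval_sextic (a x y z : R) :
    eval ![x, y, z] (sextic a) = x ^ 6 + (y ^ 2 + x * z) ^ 2 * (a * x + z) * z := by
  simp [sextic]

section CharTwo

variable [CharP R 2]

lemma pderiv_zero_sextic (a : R) :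
    pderiv 0 (sextic a) = C a * X 2 * (X 1 ^ 2 + X 0 * X 2) ^ 2 := by
  simp only [sextic, map_add, Derivation.leibniz, Derivation.leibniz_pow, pderiv_X, derivation_C,
    Pi.single_eq_same, Pi.single_eq_of_ne, ne_eq, Fin.reduceEq, not_false_eq_true, smul_eq_mul,
    nsmul_eq_mul, Nat.cast_ofNat]
  linear_combination (3 * X 0 ^ 5 + X 2 ^ 2 * (C a * X 0 + X 2) * (X 1 ^ 2 + X 0 * X 2)) *
    (CharTwo.two_eq_zero : (2 : MvPolynomial (Fin 3) R) = 0)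

lemma pderiv_one_sextic (a : R) : pderiv 1 (sextic a) = 0 := by
  simp only [sextic, map_add, Derivation.leibniz, Derivation.leibniz_pow, pderiv_X, derivation_C,
    Pi.single_eq_same, Pi.single_eq_of_ne, ne_eq, Fin.reduceEq, not_false_eq_true, smul_eq_mul,
    nsmul_eq_mul, Nat.cast_ofNat]
  linear_combination (2 * X 1 * (X 1 ^ 2 + X 0 * X 2) * (C a * X 0 + X 2) * X 2) *
    (CharTwo.two_eq_zero : (2 : MvPolynomial (Fin 3) R) = 0)

lemma pderiv_two_sextic (a : R) :
    pderiv 2 (sextic a) = C a * X 0 * (X 1 ^ 2 + X 0 * X 2) ^ 2 := by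
  simp only [sextic, map_add, Derivation.leibniz, Derivation.leibniz_pow, pderiv_X, derivation_C,
    Pi.single_eq_same, Pi.single_eq_of_ne, ne_eq, Fin.reduceEq, not_false_eq_true, smul_eq_mul,
    nsmul_eq_mul, Nat.cast_ofNat]
  linear_combination (X 2 * (X 1 ^ 2 + X 0 * X 2) ^ 2 +
      X 0 * X 2 * (C a * X 0 + X 2) * (X 1 ^ 2 + X 0 * X 2)) *
    (CharTwo.two_eq_zero : (2 : MvPolynomial (Fin 3) R) = 0)

end CharTwo

lemma sextic_singular_iff [IsDomain R] {a x y z : R} (ha : a ≠ 0) :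
    (x ^ 6 + (y ^ 2 + x * z) ^ 2 * (a * x + z) * z = 0 ∧
        a * z * (y ^ 2 + x * z) ^ 2 = 0 ∧ a * x * (y ^ 2 + x * z) ^ 2 = 0) ↔
      (x = 0 ∧ y = 0) ∨ (x = 0 ∧ z = 0) := by
  constructor
  · rintro ⟨hF, hFx, hFz⟩
    by_cases hw : y ^ 2 + x * z = 0
    · have hx : x = 0 := pow_eq_zero_iff (n := 6) (by norm_num) |>.mp (by simpa [hw] using hF)
      subst hx
      exact Or.inl ⟨rfl, by simpa using hw⟩
    · exact Or.inr ⟨by simpa [ha, hw] using hFz, by simpa [ha, hw] using hFx⟩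
  · rintro (⟨rfl, rfl⟩ | ⟨rfl, rfl⟩) <;> simp

end CobleSextic

open CobleSextic in
/-- In characteristic 2, for `a ≠ 0`, the sextic `F = x⁶ + (y²+xz)²(ax+z)z` and all
its partial derivatives vanish at a nonzero triple `(x,y,z)` iff `x = y = 0` or
`x = z = 0`; i.e. the curve `F = 0` has exactly the two singular points
`(0:0:1)` and `(0:1:0)`. -/
theorem stmt_12 (k : Type*) [Field k] [CharP k 2]
    (a : k) (ha : a ≠ 0)
    (F : MvPolynomial (Fin 3) k)
    (hF : F = X 0 ^ 6 + (X 1 ^ 2 + X 0 * X 2) ^ 2 * (C a * X 0 + X 2) * X 2) :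
    ∀ x y z : k, (x, y, z) ≠ (0, 0, 0) →
      ((eval ![x, y, z] F = 0 ∧ ∀ i : Fin 3, eval ![x, y, z] (pderiv i F) = 0)
        ↔ ((x = 0 ∧ y = 0) ∨ (x = 0 ∧ z = 0))) := by
  rintro x y z -
  change F = sextic a at hF
  subst hF
  simp only [Fin.forall_fin_succ, Fin.succ_zero_eq_one, Fin.succ_one_eq_two,
    eval_sextic, pderiv_zero_sextic, pderiv_one_sextic, pderiv_two_sextic]
  simpa using sextic_singular_iff ha
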